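/- Let (E,‖·‖_E) be a normed real vector space, let T ∈ (0,∞), α ∈ [0,1], β ∈ [α,1], let θ be a partition of [0,T], and let f, g : [0,T] → E be functions. Then |f − [g]_θ|_{C^α([0,T],E)} ≤ (2·(d_max(θ))^{1−α} / d_min(θ)) · sup_{t∈θ} ‖f(t) − g(t)‖_E + 2·(d_max(θ))^{β−α} · |f|_{C^β([0,T],E)} and ‖f − [g]_θ‖_{C^α([0,T],E)} ≤ (2·(d_max(θ))^{1−α}/d_min(θ) + 1) · sup_{t∈θ} ‖f(t) − g(t)‖_E + (2·(d_max(θ))^{−α} + 2^{−β}) · (d_max(θ))^β · |f|_{C^β([0,T],E)} (all in [0,∞]). -/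

import Mathlib

/-!
Write `e = f - [g]_θ`. On a cell `[p, q]` of the partition, `e = (f - [f]_θ) + [f - g]_θ`.
The first term is controlled by `|f|_β` alone: by concavity of `x ↦ x ^ β` it is at most
`|f|_β (2 (q - s) (s - p) / (q - p)) ^ β`, which vanishes at the nodes. The second term is affine
on the cell with nodal values bounded by `D = sup_θ ‖f - g‖`, so it is bounded by `D` and
`2 D / d_min`-Lipschitz. Comparing two points through the nodes between them gives
`‖e s - e t‖ ≤ 2 |f|_β m ^ β + (2 D / d_min) m` with `m = min |s - t| d_max`, and
`m ^ γ ≤ d_max ^ (γ - α) |s - t| ^ α` turns this into the `α`-Hölder bound.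
-/

open ENNReal

/-- The Hölder seminorm (exponent `r`) of `f` on `[0,T]`. -/
noncomputable def holderSemiOn {E : Type} [NormedAddCommGroup E]
    (T : ℝ) (r : ℝ) (f : ℝ → E) : ℝ≥0∞ :=
  ⨆ (s : ℝ) (t : ℝ) (_ : s ∈ Set.Icc (0:ℝ) T) (_ : t ∈ Set.Icc (0:ℝ) T)
    (_ : s ≠ t), (‖f s - f t‖₊ : ℝ≥0∞) / ENNReal.ofReal (|s - t| ^ r)

/-- The supremum norm of `f` on `[0,T]`. -/
noncomputable def supNormOn {E : Type} [NormedAddCommGroup E]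
    (T : ℝ) (f : ℝ → E) : ℝ≥0∞ :=
  ⨆ (t : ℝ) (_ : t ∈ Set.Icc (0:ℝ) T), (‖f t‖₊ : ℝ≥0∞)

/-- The Hölder norm (exponent `r`) of `f` on `[0,T]`. -/
noncomputable def holderNormOn {E : Type} [NormedAddCommGroup E]
    (T : ℝ) (r : ℝ) (f : ℝ → E) : ℝ≥0∞ :=
  supNormOn T f + holderSemiOn T r f

/-- Maximal mesh size of the partition with nodes `θ 0 < θ 1 < … < θ K`. -/
noncomputable def dMax (K : ℕ) (θ : ℕ → ℝ) : ℝ := ⨆ j : Fin K, (θ (j + 1) - θ j)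

/-- Minimal mesh size of the partition with nodes `θ 0 < θ 1 < … < θ K`. -/
noncomputable def dMin (K : ℕ) (θ : ℕ → ℝ) : ℝ := ⨅ j : Fin K, (θ (j + 1) - θ j)

open Set AffineMap
open scoped NNReal

lemma min_rpow_le_rpow_sub_mul_rpow {ρ d α γ : ℝ} (hρ : 0 < ρ) (hd : 0 < d) (hα : 0 ≤ α)
    (hαγ : α ≤ γ) : min ρ d ^ γ ≤ d ^ (γ - α) * ρ ^ α := by
  have hm : 0 < min ρ d := lt_min hρ hd
  calc min ρ d ^ γ = min ρ d ^ (γ - α) * min ρ d ^ α := by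
        rw [← Real.rpow_add hm, sub_add_cancel]
    _ ≤ d ^ (γ - α) * ρ ^ α := by
        gcongr ?_ * ?_
        · exact Real.rpow_le_rpow hm.le (min_le_right ρ d) (sub_nonneg.2 hαγ)
        · exact Real.rpow_le_rpow hm.le (min_le_left ρ d) hα

lemma rpow_add_rpow_le_two_mul_rpow_half {a b p : ℝ} (ha : 0 ≤ a) (hb : 0 ≤ b) (hp₀ : 0 ≤ p)
    (hp₁ : p ≤ 1) : a ^ p + b ^ p ≤ 2 * ((a + b) / 2) ^ p := by
  have h := (Real.concaveOn_rpow hp₀ hp₁).2 ha hb (by norm_num : (0 : ℝ) ≤ 1 / 2)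
    (by norm_num : (0 : ℝ) ≤ 1 / 2) (by norm_num)
  rw [smul_eq_mul, smul_eq_mul, smul_eq_mul, smul_eq_mul,
    show 1 / 2 * a + 1 / 2 * b = (a + b) / 2 by ring] at h
  linarith

lemma div_mul_rpow_le_rpow {x L p : ℝ} (hx : 0 ≤ x) (hxL : x ≤ L) (hL : 0 < L) (hp : p ≤ 1) :
    x / L * L ^ p ≤ x ^ p :=
  calc x / L * L ^ p ≤ (x / L) ^ p * L ^ p := by
        gcongr
        exact Real.self_le_rpow_of_le_one (div_nonneg hx hL.le) ((div_le_one hL).2 hxL) hp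
    _ = x ^ p := by
        rw [Real.div_rpow hx hL.le, div_mul_cancel₀ _ (Real.rpow_pos_of_pos hL p).ne']

lemma le_ofReal_mul_add_ofReal_mul {X D H : ℝ≥0∞} {a b : ℝ} (ha : 0 ≤ a) (hb : 0 < b)
    (hD : D ≠ ⊤) (h : H ≠ ⊤ → X ≤ ENNReal.ofReal (a * D.toReal + b * H.toReal)) :
    X ≤ ENNReal.ofReal a * D + ENNReal.ofReal b * H := by
  rcases eq_or_ne H ⊤ with rfl | hH
  · rw [ENNReal.mul_top (ENNReal.ofReal_pos.2 hb).ne', add_top]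
    exact le_top
  refine (h hH).trans_eq ?_
  rw [ENNReal.ofReal_add (by positivity) (by positivity), ENNReal.ofReal_mul ha,
    ENNReal.ofReal_mul hb.le, ENNReal.ofReal_toReal hD, ENNReal.ofReal_toReal hH]

section NormedAddCommGroup

variable {E : Type} [NormedAddCommGroup E]

lemma iSup_nnnorm_ne_top {ι : Type} [Finite ι] (u : ι → E) : ⨆ i, (‖u i‖₊ : ℝ≥0∞) ≠ ⊤ :=
  (ENNReal.iSup_coe_lt_top.2 (Set.finite_range _).bddAbove).ne

lemma norm_le_toReal_iSup_nnnorm {ι : Type} [Finite ι] (u : ι → E) (i : ι) :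
    ‖u i‖ ≤ (⨆ i, (‖u i‖₊ : ℝ≥0∞)).toReal := by
  simpa using ENNReal.toReal_mono (iSup_nnnorm_ne_top u) (le_iSup (fun i => (‖u i‖₊ : ℝ≥0∞)) i)

lemma HolderOnWith.norm_sub_le {A : Set ℝ} {C r : ℝ≥0} {f : ℝ → E}
    (hf : HolderOnWith C r f A) {x y : ℝ} (hx : x ∈ A) (hy : y ∈ A) :
    ‖f x - f y‖ ≤ C * |x - y| ^ (r : ℝ) := by
  have h := hf.dist_le hx hy
  rwa [Real.dist_eq, dist_eq_norm] at h

variable {T : ℝ}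

lemma holderOnWith_toNNReal_holderSemiOn {r : ℝ≥0} {f : ℝ → E} (h : holderSemiOn T r f ≠ ⊤) :
    HolderOnWith (holderSemiOn T r f).toNNReal r f (Icc 0 T) := by
  intro x hx y hy
  rw [ENNReal.coe_toNNReal h]
  rcases eq_or_ne x y with rfl | hxy
  · simp
  have hpos : 0 < |x - y| := abs_pos.2 (sub_ne_zero.2 hxy)
  rw [edist_eq_enorm_sub, enorm_eq_nnnorm, edist_dist, Real.dist_eq,
    ENNReal.ofReal_rpow_of_nonneg hpos.le r.coe_nonneg,
    ← ENNReal.div_le_iff (ENNReal.ofReal_pos.2 (Real.rpow_pos_of_pos hpos _)).ne'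
      ENNReal.ofReal_ne_top]
  exact le_iSup₂_of_le x y (le_iSup₂_of_le hx hy (le_iSup_of_le hxy le_rfl))

lemma holderSemiOn_le_ofReal {r C : ℝ} {φ : ℝ → E}
    (h : ∀ s ∈ Icc 0 T, ∀ t ∈ Icc 0 T, ‖φ s - φ t‖ ≤ C * |s - t| ^ r) :
    holderSemiOn T r φ ≤ ENNReal.ofReal C := by
  refine iSup₂_le fun s t => iSup₂_le fun hs ht => iSup_le fun hst => ?_
  have hpos : 0 < |s - t| ^ r := Real.rpow_pos_of_pos (abs_pos.2 (sub_ne_zero.2 hst)) r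
  rw [ENNReal.div_le_iff (ENNReal.ofReal_pos.2 hpos).ne' ENNReal.ofReal_ne_top,
    ← ENNReal.ofReal_mul' hpos.le, ← ofReal_coe_nnreal, coe_nnnorm]
  exact ENNReal.ofReal_le_ofReal (h s hs t ht)

lemma supNormOn_le_ofReal {C : ℝ} {φ : ℝ → E} (h : ∀ t ∈ Icc 0 T, ‖φ t‖ ≤ C) :
    supNormOn T φ ≤ ENNReal.ofReal C :=
  iSup₂_le fun t ht => by
    rw [← ofReal_coe_nnreal, coe_nnnorm]
    exact ENNReal.ofReal_le_ofReal (h t ht)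

end NormedAddCommGroup

section Cell

variable {E : Type} [NormedAddCommGroup E] [NormedSpace ℝ E] {f g gi : ℝ → E}
  {p q s t L D : ℝ} {C r : ℝ≥0}

lemma div_sub_mem_Icc_zero_one (hpq : p < q) (hs : s ∈ Icc p q) :
    (s - p) / (q - p) ∈ Icc (0 : ℝ) 1 :=
  ⟨div_nonneg (sub_nonneg.2 hs.1) (sub_pos.2 hpq).le,
    (div_le_one (sub_pos.2 hpq)).2 (by linarith [hs.2])⟩

lemma one_sub_div_sub (hpq : p < q) : 1 - (s - p) / (q - p) = (q - s) / (q - p) := by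
  field_simp [(sub_pos.2 hpq).ne']
  ring

noncomputable def interpolationError (f : ℝ → E) (p q s : ℝ) : E :=
  f s - lineMap (f p) (f q) ((s - p) / (q - p))

def IsAffineInterpolationOn (g gi : ℝ → E) (p q : ℝ) : Prop :=
  ∀ s ∈ Icc p q, gi s = ((q - s) / (q - p)) • g p + ((s - p) / (q - p)) • g q

lemma IsAffineInterpolationOn.sub_eq (hgi : IsAffineInterpolationOn g gi p q) (hpq : p < q)
    (hs : s ∈ Icc p q) :
    f s - gi s = interpolationError f p q s
      + lineMap (f p - g p) (f q - g q) ((s - p) / (q - p)) := by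
  rw [hgi s hs, interpolationError, lineMap_apply_module, lineMap_apply_module,
    one_sub_div_sub hpq]
  module

lemma norm_interpolationError_le (hr : (r : ℝ) ≤ 1) (hpq : p < q)
    (hf : HolderOnWith C r f (Icc p q)) (hs : s ∈ Icc p q) :
    ‖interpolationError f p q s‖ ≤ C * (2 * ((q - s) * (s - p)) / (q - p)) ^ (r : ℝ) := by
  set c := (s - p) / (q - p) with hc
  obtain ⟨hc0, hc1⟩ := div_sub_mem_Icc_zero_one hpq hs
  have hsp : ‖f s - f p‖ ≤ C * (s - p) ^ (r : ℝ) := by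
    simpa only [abs_of_nonneg (sub_nonneg.2 hs.1)] using
      hf.norm_sub_le hs (left_mem_Icc.2 hpq.le)
  have hsq : ‖f s - f q‖ ≤ C * (q - s) ^ (r : ℝ) := by
    simpa only [abs_sub_comm s q, abs_of_nonneg (sub_nonneg.2 hs.2)] using
      hf.norm_sub_le hs (right_mem_Icc.2 hpq.le)
  calc ‖interpolationError f p q s‖ = ‖(1 - c) • (f s - f p) + c • (f s - f q)‖ := by
        rw [interpolationError, lineMap_apply_module]
        congr 1
        module
    _ ≤ (1 - c) * (C * (s - p) ^ (r : ℝ)) + c * (C * (q - s) ^ (r : ℝ)) := by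
        refine (norm_add_le _ _).trans ?_
        rw [norm_smul, norm_smul, Real.norm_of_nonneg (sub_nonneg.2 hc1),
          Real.norm_of_nonneg hc0]
        gcongr
    _ = C * ((1 - c) * (s - p) ^ (r : ℝ) + c * (q - s) ^ (r : ℝ)) := by ring
    _ ≤ C * ((1 - c) * (s - p) + c * (q - s)) ^ (r : ℝ) := by
        gcongr
        simpa only [smul_eq_mul] using (Real.concaveOn_rpow r.coe_nonneg hr).2
          (sub_nonneg.2 hs.1) (sub_nonneg.2 hs.2) (sub_nonneg.2 hc1) hc0 (sub_add_cancel 1 c)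
    _ = C * (2 * ((q - s) * (s - p)) / (q - p)) ^ (r : ℝ) := by
        rw [one_sub_div_sub hpq, hc]
        congr 2
        field_simp [(sub_pos.2 hpq).ne']
        ring

lemma norm_interpolationError_sub_le (hr : (r : ℝ) ≤ 1) (hpq : p < q)
    (hf : HolderOnWith C r f (Icc p q)) (hs : s ∈ Icc p q) (ht : t ∈ Icc p q) :
    ‖interpolationError f p q s - interpolationError f p q t‖ ≤ 2 * C * |s - t| ^ (r : ℝ) := by
  have hqp : 0 < q - p := sub_pos.2 hpq
  have hdiff : interpolationError f p q s - interpolationError f p q t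
      = (f s - f t) - ((s - t) / (q - p)) • (f q - f p) := by
    simp only [interpolationError, lineMap_apply_module']
    module
  have hst : |s - t| ≤ q - p :=
    abs_sub_le_iff.2 ⟨by linarith [hs.2, ht.1], by linarith [hs.1, ht.2]⟩
  have hqp' : ‖f q - f p‖ ≤ C * (q - p) ^ (r : ℝ) := by
    simpa only [abs_of_pos hqp] using
      hf.norm_sub_le (right_mem_Icc.2 hpq.le) (left_mem_Icc.2 hpq.le)
  calc ‖interpolationError f p q s - interpolationError f p q t‖
      ≤ ‖f s - f t‖ + |s - t| / (q - p) * ‖f q - f p‖ := by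
        rw [hdiff]
        refine (norm_sub_le _ _).trans_eq ?_
        rw [norm_smul, Real.norm_eq_abs, abs_div, abs_of_pos hqp]
    _ ≤ C * |s - t| ^ (r : ℝ) + C * (|s - t| / (q - p) * (q - p) ^ (r : ℝ)) := by
        rw [mul_left_comm]
        gcongr
        exact hf.norm_sub_le hs ht
    _ ≤ C * |s - t| ^ (r : ℝ) + C * |s - t| ^ (r : ℝ) := by
        gcongr
        exact div_mul_rpow_le_rpow (abs_nonneg _) hst hqp hr
    _ = 2 * C * |s - t| ^ (r : ℝ) := by ring

lemma IsAffineInterpolationOn.norm_sub_sub_right_le (hgi : IsAffineInterpolationOn g gi p q)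
    (hr : (r : ℝ) ≤ 1) (hpq : p < q) (hf : HolderOnWith C r f (Icc p q))
    (hL : ‖(f p - g p) - (f q - g q)‖ ≤ L * (q - p)) (hs : s ∈ Icc p q) :
    ‖(f s - gi s) - (f q - g q)‖ ≤ C * (2 * (q - s)) ^ (r : ℝ) + L * (q - s) := by
  have hqp : 0 < q - p := sub_pos.2 hpq
  have hw : 0 ≤ (q - s) / (q - p) := div_nonneg (sub_nonneg.2 hs.2) hqp.le
  rw [hgi.sub_eq hpq hs, add_sub_assoc]
  refine (norm_add_le _ _).trans (add_le_add ?_ ?_)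
  · refine (norm_interpolationError_le hr hpq hf hs).trans ?_
    gcongr _ * ?_ ^ _
    · have := hs.1; have := hs.2; positivity
    · rw [div_le_iff₀ hqp]
      nlinarith [hs.1, hs.2]
  · rw [← dist_eq_norm, dist_lineMap_right, dist_eq_norm, one_sub_div_sub hpq,
      Real.norm_of_nonneg hw]
    calc (q - s) / (q - p) * ‖(f p - g p) - (f q - g q)‖
        ≤ (q - s) / (q - p) * (L * (q - p)) := by gcongr
      _ = L * (q - s) := by field_simp

lemma IsAffineInterpolationOn.norm_sub_sub_left_le (hgi : IsAffineInterpolationOn g gi p q)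
    (hr : (r : ℝ) ≤ 1) (hpq : p < q) (hf : HolderOnWith C r f (Icc p q))
    (hL : ‖(f p - g p) - (f q - g q)‖ ≤ L * (q - p)) (hs : s ∈ Icc p q) :
    ‖(f s - gi s) - (f p - g p)‖ ≤ C * (2 * (s - p)) ^ (r : ℝ) + L * (s - p) := by
  have hqp : 0 < q - p := sub_pos.2 hpq
  have hw : 0 ≤ (s - p) / (q - p) := div_nonneg (sub_nonneg.2 hs.1) hqp.le
  rw [hgi.sub_eq hpq hs, add_sub_assoc]
  refine (norm_add_le _ _).trans (add_le_add ?_ ?_)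
  · refine (norm_interpolationError_le hr hpq hf hs).trans ?_
    gcongr _ * ?_ ^ _
    · have := hs.1; have := hs.2; positivity
    · rw [div_le_iff₀ hqp]
      nlinarith [hs.1, hs.2]
  · rw [← dist_eq_norm, dist_lineMap_left, dist_eq_norm, Real.norm_of_nonneg hw]
    calc (s - p) / (q - p) * ‖(f p - g p) - (f q - g q)‖
        ≤ (s - p) / (q - p) * (L * (q - p)) := by gcongr
      _ = L * (s - p) := by field_simp

lemma IsAffineInterpolationOn.norm_sub_sub_le (hgi : IsAffineInterpolationOn g gi p q)
    (hr : (r : ℝ) ≤ 1) (hpq : p < q) (hf : HolderOnWith C r f (Icc p q))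
    (hL : ‖(f p - g p) - (f q - g q)‖ ≤ L * (q - p)) (hs : s ∈ Icc p q) (ht : t ∈ Icc p q) :
    ‖(f s - gi s) - (f t - gi t)‖ ≤ 2 * C * |s - t| ^ (r : ℝ) + L * |s - t| := by
  have hqp : 0 < q - p := sub_pos.2 hpq
  rw [hgi.sub_eq hpq hs, hgi.sub_eq hpq ht, add_sub_add_comm]
  refine (norm_add_le _ _).trans
    (add_le_add (norm_interpolationError_sub_le hr hpq hf hs ht) ?_)
  rw [← dist_eq_norm, dist_lineMap_lineMap, Real.dist_eq, dist_eq_norm, ← sub_div, abs_div,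
    abs_of_pos hqp, sub_sub_sub_cancel_right]
  calc |s - t| / (q - p) * ‖(f p - g p) - (f q - g q)‖
      ≤ |s - t| / (q - p) * (L * (q - p)) := by gcongr
    _ = L * |s - t| := by field_simp

lemma IsAffineInterpolationOn.norm_sub_le (hgi : IsAffineInterpolationOn g gi p q)
    (hr : (r : ℝ) ≤ 1) (hpq : p < q) (hf : HolderOnWith C r f (Icc p q))
    (hp : ‖f p - g p‖ ≤ D) (hq : ‖f q - g q‖ ≤ D) (hs : s ∈ Icc p q) :
    ‖f s - gi s‖ ≤ C * ((q - p) / 2) ^ (r : ℝ) + D := by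
  have hqp : 0 < q - p := sub_pos.2 hpq
  rw [hgi.sub_eq hpq hs]
  refine (norm_add_le _ _).trans (add_le_add ?_ ?_)
  · refine (norm_interpolationError_le hr hpq hf hs).trans ?_
    gcongr _ * ?_ ^ _
    · have := hs.1; have := hs.2; positivity
    · rw [div_le_div_iff₀ hqp two_pos]
      nlinarith [sq_nonneg (q + p - 2 * s)]
  · simpa only [mem_closedBall_zero_iff] using (convex_closedBall (0 : E) D).lineMap_mem
      (mem_closedBall_zero_iff.2 hp) (mem_closedBall_zero_iff.2 hq)
      (div_sub_mem_Icc_zero_one hpq hs)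

end Cell

section Partition

variable {K : ℕ} {θ : ℕ → ℝ}

lemma partition_le (hθ : ∀ j < K, θ j < θ (j + 1)) {i j : ℕ} (hij : i ≤ j) (hj : j ≤ K) :
    θ i ≤ θ j :=
  (strictMonoOn_Iic_of_lt_succ (n := K) fun m hm => by simpa using hθ m hm).monotoneOn
    (hij.trans hj) hj hij

lemma Icc_subset_Icc_partition (hθ : ∀ j < K, θ j < θ (j + 1)) {j : ℕ} (hj : j < K) :
    Icc (θ j) (θ (j + 1)) ⊆ Icc (θ 0) (θ K) :=
  Icc_subset_Icc (partition_le hθ (Nat.zero_le j) hj.le) (partition_le hθ hj le_rfl)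

lemma exists_mem_Icc_partition (hK : 0 < K) (hθ : ∀ j < K, θ j < θ (j + 1)) {s : ℝ}
    (hs : s ∈ Icc (θ 0) (θ K)) : ∃ j < K, s ∈ Icc (θ j) (θ (j + 1)) := by
  classical
  have hex : ∃ n, s ≤ θ n := ⟨K, hs.2⟩
  have hle : Nat.find hex ≤ K := Nat.find_min' hex hs.2
  rcases h : Nat.find hex with _ | j
  · exact ⟨0, hK, hs.1, (h ▸ Nat.find_spec hex).trans (hθ 0 hK).le⟩
  · exact ⟨j, by omega, (not_le.1 (Nat.find_min hex (by omega))).le, h ▸ Nat.find_spec hex⟩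

lemma dMin_le {j : ℕ} (hj : j < K) : dMin K θ ≤ θ (j + 1) - θ j :=
  ciInf_le (f := fun j : Fin K => θ (j + 1) - θ j) (Set.finite_range _).bddBelow ⟨j, hj⟩

lemma le_dMax {j : ℕ} (hj : j < K) : θ (j + 1) - θ j ≤ dMax K θ :=
  le_ciSup (f := fun j : Fin K => θ (j + 1) - θ j) (Set.finite_range _).bddAbove ⟨j, hj⟩

lemma dMin_pos (hK : 0 < K) (hθ : ∀ j < K, θ j < θ (j + 1)) : 0 < dMin K θ := by
  have : Nonempty (Fin K) := ⟨⟨0, hK⟩⟩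
  obtain ⟨j, hj⟩ := exists_eq_ciInf_of_finite (f := fun j : Fin K => θ (j + 1) - θ j)
  rw [dMin, ← hj]
  exact sub_pos.2 (hθ j j.2)

lemma norm_node_sub_node_le {E : Type} [NormedAddCommGroup E] {f g : ℝ → E} {D : ℝ}
    (hK : 0 < K) (hθ : ∀ j < K, θ j < θ (j + 1)) (hD : ∀ j ≤ K, ‖f (θ j) - g (θ j)‖ ≤ D)
    {i k : ℕ} (hik : i ≤ k) (hk : k ≤ K) :
    ‖(f (θ i) - g (θ i)) - (f (θ k) - g (θ k))‖ ≤ 2 * D / dMin K θ * (θ k - θ i) := by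
  rcases hik.eq_or_lt with rfl | hik
  · simp
  have hdn := dMin_pos hK hθ
  have hD0 : 0 ≤ D := (norm_nonneg _).trans (hD 0 (Nat.zero_le K))
  calc ‖(f (θ i) - g (θ i)) - (f (θ k) - g (θ k))‖ ≤ D + D :=
        norm_sub_le_of_le (hD i (hik.le.trans hk)) (hD k hk)
    _ = 2 * D / dMin K θ * dMin K θ := by field_simp; ring
    _ ≤ 2 * D / dMin K θ * (θ k - θ i) := by
        gcongr
        linarith [dMin_le (θ := θ) (hik.trans_le hk), partition_le hθ hik hk]

variable {E : Type} [NormedAddCommGroup E] [NormedSpace ℝ E] {f g gi : ℝ → E} {C r : ℝ≥0}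
  {D : ℝ}

lemma norm_sub_sub_le_rpow_add_mul_of_le (hK : 0 < K) (hθ : ∀ j < K, θ j < θ (j + 1))
    (hgi : ∀ j < K, IsAffineInterpolationOn g gi (θ j) (θ (j + 1))) (hr : (r : ℝ) ≤ 1)
    (hf : HolderOnWith C r f (Icc (θ 0) (θ K))) (hD : ∀ j ≤ K, ‖f (θ j) - g (θ j)‖ ≤ D)
    {s t : ℝ} (hs : s ∈ Icc (θ 0) (θ K)) (ht : t ∈ Icc (θ 0) (θ K)) (hst : s ≤ t) :
    ‖(f s - gi s) - (f t - gi t)‖ ≤ 2 * C * (t - s) ^ (r : ℝ) + 2 * D / dMin K θ * (t - s) := by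
  rcases hst.eq_or_lt with rfl | hst
  · simp only [sub_self, norm_zero, mul_zero, add_zero]
    positivity
  obtain ⟨j, hj, hsj⟩ := exists_mem_Icc_partition hK hθ hs
  obtain ⟨k, hk, htk⟩ := exists_mem_Icc_partition hK hθ ht
  set L := 2 * D / dMin K θ
  have hL : ∀ j < K, ‖(f (θ j) - g (θ j)) - (f (θ (j + 1)) - g (θ (j + 1)))‖
      ≤ L * (θ (j + 1) - θ j) := fun j hj => norm_node_sub_node_le hK hθ hD j.le_succ hj
  have hcell : ∀ j < K, HolderOnWith C r f (Icc (θ j) (θ (j + 1))) :=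
    fun j hj => hf.mono (Icc_subset_Icc_partition hθ hj)
  rcases lt_trichotomy j k with hjk | rfl | hkj
  · -- pass through the nodes `θ (j + 1) ≤ θ k`; concavity merges the two Hölder terms
    have hs' := (hgi j hj).norm_sub_sub_right_le hr (hθ j hj) (hcell j hj) (hL j hj) hsj
    have hnodes := norm_node_sub_node_le hK hθ hD (f := f) (g := g) hjk hk.le
    have ht' := (hgi k hk).norm_sub_sub_left_le hr (hθ k hk) (hcell k hk) (hL k hk) htk
    have hmid := partition_le hθ hjk hk.le
    have hconc : (2 * (θ (j + 1) - s)) ^ (r : ℝ) + (2 * (t - θ k)) ^ (r : ℝ)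
        ≤ 2 * (t - s) ^ (r : ℝ) := by
      refine (rpow_add_rpow_le_two_mul_rpow_half (by linarith [hsj.2]) (by linarith [htk.1])
        r.coe_nonneg hr).trans ?_
      gcongr
      · linarith [hsj.2, htk.1]
      · linarith
    calc ‖(f s - gi s) - (f t - gi t)‖
        = ‖((f s - gi s) - (f (θ (j + 1)) - g (θ (j + 1))))
            + ((f (θ (j + 1)) - g (θ (j + 1))) - (f (θ k) - g (θ k)))
            - ((f t - gi t) - (f (θ k) - g (θ k)))‖ := by congr 1; abel
      _ ≤ ‖(f s - gi s) - (f (θ (j + 1)) - g (θ (j + 1)))‖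
            + ‖(f (θ (j + 1)) - g (θ (j + 1))) - (f (θ k) - g (θ k))‖
            + ‖(f t - gi t) - (f (θ k) - g (θ k))‖ :=
          norm_sub_le_of_le (norm_add_le _ _) le_rfl
      _ ≤ (C * (2 * (θ (j + 1) - s)) ^ (r : ℝ) + L * (θ (j + 1) - s))
            + L * (θ k - θ (j + 1)) + (C * (2 * (t - θ k)) ^ (r : ℝ) + L * (t - θ k)) := by
          gcongr
      _ = C * ((2 * (θ (j + 1) - s)) ^ (r : ℝ) + (2 * (t - θ k)) ^ (r : ℝ))
            + L * (t - s) := by ring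
      _ ≤ C * (2 * (t - s) ^ (r : ℝ)) + L * (t - s) := by gcongr
      _ = 2 * C * (t - s) ^ (r : ℝ) + L * (t - s) := by ring
  · have h := (hgi j hj).norm_sub_sub_le hr (hθ j hj) (hcell j hj) (hL j hj) hsj htk
    rwa [abs_sub_comm, abs_of_pos (sub_pos.2 hst)] at h
  · linarith [partition_le hθ hkj hj.le, hsj.1, htk.2]

lemma norm_sub_le_of_mem_partition (hK : 0 < K) (hθ : ∀ j < K, θ j < θ (j + 1))
    (hgi : ∀ j < K, IsAffineInterpolationOn g gi (θ j) (θ (j + 1))) (hr : (r : ℝ) ≤ 1)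
    (hf : HolderOnWith C r f (Icc (θ 0) (θ K))) (hD : ∀ j ≤ K, ‖f (θ j) - g (θ j)‖ ≤ D)
    {s : ℝ} (hs : s ∈ Icc (θ 0) (θ K)) :
    ‖f s - gi s‖ ≤ C * (dMax K θ / 2) ^ (r : ℝ) + D := by
  obtain ⟨j, hj, hsj⟩ := exists_mem_Icc_partition hK hθ hs
  refine ((hgi j hj).norm_sub_le hr (hθ j hj) (hf.mono (Icc_subset_Icc_partition hθ hj))
    (hD j hj.le) (hD (j + 1) hj) hsj).trans ?_
  gcongr _ * ?_ ^ _ + _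
  · exact div_nonneg (sub_nonneg.2 (hθ j hj).le) zero_le_two
  · exact div_le_div_of_nonneg_right (le_dMax hj) zero_le_two

lemma norm_sub_sub_le_mul_rpow (hK : 0 < K) (hθ : ∀ j < K, θ j < θ (j + 1))
    (hgi : ∀ j < K, IsAffineInterpolationOn g gi (θ j) (θ (j + 1))) (hr : (r : ℝ) ≤ 1)
    (hf : HolderOnWith C r f (Icc (θ 0) (θ K))) (hD : ∀ j ≤ K, ‖f (θ j) - g (θ j)‖ ≤ D)
    {α : ℝ} (hα : 0 ≤ α) (hαr : α ≤ r) {s t : ℝ} (hs : s ∈ Icc (θ 0) (θ K))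
    (ht : t ∈ Icc (θ 0) (θ K)) :
    ‖(f s - gi s) - (f t - gi t)‖ ≤ (2 * dMax K θ ^ (1 - α) / dMin K θ * D
      + 2 * dMax K θ ^ ((r : ℝ) - α) * C) * |s - t| ^ α := by
  wlog hst : s ≤ t generalizing s t
  · simpa only [norm_sub_rev, abs_sub_comm] using this ht hs (le_of_not_ge hst)
  have hdn := dMin_pos hK hθ
  have hdm : 0 < dMax K θ := hdn.trans_le ((dMin_le hK).trans (le_dMax hK))
  have hD0 : 0 ≤ D := (norm_nonneg _).trans (hD 0 (Nat.zero_le K))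
  rcases hst.eq_or_lt with rfl | hst
  · simp only [sub_self, norm_zero]
    positivity
  rw [abs_sub_comm, abs_of_pos (sub_pos.2 hst)]
  set L := 2 * D / dMin K θ
  set m := min (t - s) (dMax K θ) with hm
  have hmin : ‖(f s - gi s) - (f t - gi t)‖ ≤ 2 * C * m ^ (r : ℝ) + L * m := by
    rcases le_total (t - s) (dMax K θ) with h | h
    · rw [hm, min_eq_left h]
      exact norm_sub_sub_le_rpow_add_mul_of_le hK hθ hgi hr hf hD hs ht hst.le
    · rw [hm, min_eq_right h]
      have hs' := norm_sub_le_of_mem_partition hK hθ hgi hr hf hD hs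
      have ht' := norm_sub_le_of_mem_partition hK hθ hgi hr hf hD ht
      have hhalf : (dMax K θ / 2) ^ (r : ℝ) ≤ dMax K θ ^ (r : ℝ) := by
        gcongr
        linarith
      have hLdm : 2 * D ≤ L * dMax K θ := by
        rw [div_mul_eq_mul_div, le_div_iff₀ hdn]
        gcongr
        exact (dMin_le hK).trans (le_dMax hK)
      calc ‖(f s - gi s) - (f t - gi t)‖ ≤ ‖f s - gi s‖ + ‖f t - gi t‖ := norm_sub_le _ _
        _ ≤ 2 * C * dMax K θ ^ (r : ℝ) + L * dMax K θ := by nlinarith [C.coe_nonneg]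
  calc ‖(f s - gi s) - (f t - gi t)‖ ≤ 2 * C * m ^ (r : ℝ) + L * m ^ (1 : ℝ) := by
        rwa [Real.rpow_one]
    _ ≤ 2 * C * (dMax K θ ^ ((r : ℝ) - α) * (t - s) ^ α)
        + L * (dMax K θ ^ (1 - α) * (t - s) ^ α) := by
        gcongr
        · exact min_rpow_le_rpow_sub_mul_rpow (sub_pos.2 hst) hdm hα hαr
        · exact min_rpow_le_rpow_sub_mul_rpow (sub_pos.2 hst) hdm hα (hαr.trans hr)
    _ = (2 * dMax K θ ^ (1 - α) / dMin K θ * D + 2 * dMax K θ ^ ((r : ℝ) - α) * C)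
        * (t - s) ^ α := by ring

end Partition

theorem lem_hoelderconv2_general
    {E : Type} [NormedAddCommGroup E] [NormedSpace ℝ E]
    (T : ℝ)
    (α β : ℝ) (hα : α ∈ Set.Icc (0:ℝ) 1) (hβ : β ∈ Set.Icc α 1)
    (K : ℕ) (hK : 1 ≤ K) (θ : ℕ → ℝ)
    (hθ0 : θ 0 = 0) (hθK : θ K = T)
    (hθmono : ∀ j, j < K → θ j < θ (j + 1))
    (f g gi : ℝ → E)
    (hgi : ∀ j, j < K → ∀ s ∈ Set.Icc (θ j) (θ (j + 1)),
        gi s = ((θ (j + 1) - s) / (θ (j + 1) - θ j)) • g (θ j)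
            + ((s - θ j) / (θ (j + 1) - θ j)) • g (θ (j + 1))) :
    holderSemiOn T α (fun t => f t - gi t)
      ≤ ENNReal.ofReal (2 * (dMax K θ) ^ (1 - α) / dMin K θ) *
          (⨆ j : Fin (K + 1), (‖f (θ j) - g (θ j)‖₊ : ℝ≥0∞))
        + ENNReal.ofReal (2 * (dMax K θ) ^ (β - α)) * holderSemiOn T β f
    ∧
    holderNormOn T α (fun t => f t - gi t)
      ≤ ENNReal.ofReal (2 * (dMax K θ) ^ (1 - α) / dMin K θ + 1) *
          (⨆ j : Fin (K + 1), (‖f (θ j) - g (θ j)‖₊ : ℝ≥0∞))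
        + ENNReal.ofReal ((2 * (dMax K θ) ^ (-α) + 2 ^ (-β)) * (dMax K θ) ^ β) *
            holderSemiOn T β f := by
  obtain ⟨hα0, -⟩ := hα
  obtain ⟨hαβ, hβ1⟩ := hβ
  lift β to ℝ≥0 using hα0.trans hαβ
  have hdn := dMin_pos hK hθmono
  have hdm : 0 < dMax K θ := hdn.trans_le ((dMin_le hK).trans (le_dMax hK))
  have hnode (j : ℕ) (hj : j ≤ K) := norm_le_toReal_iSup_nnnorm
    (fun i : Fin (K + 1) => f (θ i) - g (θ i)) ⟨j, Nat.lt_succ_of_le hj⟩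
  have hIcc : Icc 0 T = Icc (θ 0) (θ K) := by rw [hθ0, hθK]
  have hf (hH : holderSemiOn T β f ≠ ⊤) := hIcc ▸ holderOnWith_toNNReal_holderSemiOn hH
  have hsemi (hH : holderSemiOn T β f ≠ ⊤) := holderSemiOn_le_ofReal fun s hs t ht =>
    norm_sub_sub_le_mul_rpow hK hθmono hgi hβ1 (hf hH) hnode hα0 hαβ (hIcc ▸ hs) (hIcc ▸ ht)
  have hsup (hH : holderSemiOn T β f ≠ ⊤) := supNormOn_le_ofReal fun s hs =>
    norm_sub_le_of_mem_partition hK hθmono hgi hβ1 (hf hH) hnode (hIcc ▸ hs)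
  refine ⟨le_ofReal_mul_add_ofReal_mul (by positivity) (by positivity)
    (iSup_nnnorm_ne_top _) hsemi, le_ofReal_mul_add_ofReal_mul (by positivity) (by positivity)
    (iSup_nnnorm_ne_top _) fun hH => (add_le_add (hsup hH) (hsemi hH)).trans_eq ?_⟩
  rw [← ENNReal.ofReal_add (by positivity) (by positivity)]
  congr 1
  rw [Real.div_rpow hdm.le zero_le_two, Real.rpow_neg zero_le_two, Real.rpow_neg hdm.le,
    Real.rpow_sub hdm (β : ℝ) α]
  push_cast
  ring

/-- **Lemma 2.6** (approximations by piecewise affine linear functions):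
Hölder estimates for `f − [g]_θ`, where `gi = [g]_θ` is the piecewise affine
linear interpolation of `g` at the nodes of the partition `θ`. -/
theorem lem_hoelderconv2
    {E : Type} [NormedAddCommGroup E] [NormedSpace ℝ E]
    (T : ℝ) (hT : 0 < T)
    (α β : ℝ) (hα : α ∈ Set.Icc (0:ℝ) 1) (hβ : β ∈ Set.Icc α 1)
    (K : ℕ) (hK : 1 ≤ K) (θ : ℕ → ℝ)
    (hθ0 : θ 0 = 0) (hθK : θ K = T)
    (hθmono : ∀ j, j < K → θ j < θ (j + 1))
    (f g gi : ℝ → E)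
    (hgi : ∀ j, j < K → ∀ s ∈ Set.Icc (θ j) (θ (j + 1)),
        gi s = ((θ (j + 1) - s) / (θ (j + 1) - θ j)) • g (θ j)
            + ((s - θ j) / (θ (j + 1) - θ j)) • g (θ (j + 1))) :
    holderSemiOn T α (fun t => f t - gi t)
      ≤ ENNReal.ofReal (2 * (dMax K θ) ^ (1 - α) / dMin K θ) *
          (⨆ j : Fin (K + 1), (‖f (θ j) - g (θ j)‖₊ : ℝ≥0∞))
        + ENNReal.ofReal (2 * (dMax K θ) ^ (β - α)) * holderSemiOn T β f
    ∧
    holderNormOn T α (fun t => f t - gi t)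
      ≤ ENNReal.ofReal (2 * (dMax K θ) ^ (1 - α) / dMin K θ + 1) *
          (⨆ j : Fin (K + 1), (‖f (θ j) - g (θ j)‖₊ : ℝ≥0∞))
        + ENNReal.ofReal ((2 * (dMax K θ) ^ (-α) + 2 ^ (-β)) * (dMax K θ) ^ β) *
            holderSemiOn T β f :=
  lem_hoelderconv2_general T α β hα hβ K hK θ hθ0 hθK hθmono f g gi hgi
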